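/- arXiv:2202.08801 — 2 statements merged into one kernel-verified Lean document; each statement's English description precedes it below -/
import Mathlib

section
/- Let A = diag(−λ_1 D + Q, ..., −λ_N D + Q) be a block-diagonal matrix in ℝ^{mN×mN} and let B̃ = col(B·𝓑_1, ..., B·𝓑_N) where B = e_1 ∈ ℝ^m and 𝓑_n ∈ ℝ^{1×N} are row vectors stacked into the N×N matrix 𝓑 = col(𝓑_1,...,𝓑_N). Assume: (i) the subdiagonal entries of Q are nonzero and Q has zero entries below the first subdiagonal; (ii) the λ_n are pairwise distinct; (iii) 𝓑 is nonsingular. Then the pair (A, B̃) is stabilizable; in particular, rank[A − μ I_{mN}, B̃] = mN for every complex μ with nonnegative real part. -/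
/-!
Let `v` be in the left kernel of `[A - μ I, B̃]`. Since `B = e₁`, the columns of `B̃` say that the
vector of first coordinates `(v (n, 1))ₙ` is annihilated by `𝓑`, so all of them vanish. Each
diagonal block `-λₙ D + Q - μ I` has the same off-diagonal entries as `Q`, hence is again a
cascade, and for a cascade `C` the `k`-th column of `w C = 0` reads
`w (k + 1) C (k + 1) k = -(terms in w 1, …, w k)`. Starting from `w 1 = 0`, every block of `v`
vanishes, so the rows are independent and the rank is `mN`.
-/

open Matrix

namespace Matrix

variable {R S K : Type*}

/-- An unreduced upper Hessenberg matrix: zero below the first subdiagonal, nonzero on it.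
The paper calls such a matrix a cascade. -/
def IsCascade {m : ℕ} [Zero R] (C : Matrix (Fin m) (Fin m) R) : Prop :=
  (∀ i j : Fin m, (j : ℕ) + 1 < i → C i j = 0) ∧ ∀ i j : Fin m, (i : ℕ) = j + 1 → C i j ≠ 0

namespace IsCascade

variable {m : ℕ}

theorem map [Zero R] [Zero S] {C : Matrix (Fin m) (Fin m) R} (hC : C.IsCascade) {f : R → S}
    (hf : Function.Injective f) (hf0 : f 0 = 0) : (C.map f).IsCascade :=
  ⟨fun i j h => by rw [map_apply, hC.1 i j h, hf0],
    fun i j h => by rw [map_apply, ← hf0]; exact hf.ne (hC.2 i j h)⟩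

theorem congr_offDiag [Zero R] {C C' : Matrix (Fin m) (Fin m) R} (hC : C.IsCascade)
    (h : ∀ i j, i ≠ j → C' i j = C i j) : C'.IsCascade :=
  ⟨fun i j hij => by rw [h i j (by rw [Ne, Fin.ext_iff]; omega)]; exact hC.1 i j hij,
    fun i j hij => by rw [h i j (by rw [Ne, Fin.ext_iff]; omega)]; exact hC.2 i j hij⟩

theorem eq_zero_of_vecMul_eq_zero [NonUnitalNonAssocSemiring R] [NoZeroDivisors R]
    {C : Matrix (Fin m) (Fin m) R} (hC : C.IsCascade) {w : Fin m → R} (hw : w ᵥ* C = 0)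
    (hw0 : ∀ i : Fin m, (i : ℕ) = 0 → w i = 0) : w = 0 := by
  suffices h : ∀ k : ℕ, ∀ i : Fin m, (i : ℕ) ≤ k → w i = 0 from funext fun i => h i i le_rfl
  intro k
  induction k with
  | zero => exact fun i hi => hw0 i (Nat.le_zero.mp hi)
  | succ k ih =>
    intro i hi
    rcases Nat.lt_or_eq_of_le hi with hlt | hik
    · exact ih i (Nat.lt_succ_iff.mp hlt)
    let j : Fin m := ⟨k, by omega⟩
    have hcol : ∑ l, w l * C l j = 0 := congrFun hw j
    rw [Finset.sum_eq_single i] at hcol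
    · exact (mul_eq_zero.mp hcol).resolve_right (hC.2 i j hik)
    · intro l _ hli
      rcases le_or_gt (l : ℕ) k with hlk | hkl
      · rw [ih l hlk, zero_mul]
      · have hli' : (l : ℕ) ≠ i := fun h => hli (Fin.ext h)
        rw [hC.1 l j (by simp only [j]; omega), mul_zero]
    · simp

end IsCascade

theorem rank_eq_card_of_vecMul_eq_zero [Field K] {m n : Type*} [Fintype m] [Fintype n]
    {M : Matrix m n K} (h : ∀ v, v ᵥ* M = 0 → v = 0) : M.rank = Fintype.card m :=
  LinearIndependent.rank_matrix <| vecMul_injective_iff.mp <| by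
    rw [← coe_vecMulLinear]
    exact (injective_iff_map_eq_zero _).mpr h

section BlockRows

variable {ι κ ι' : Type*} [Fintype ι] [Fintype κ]

theorem vecMul_submatrix_prodMk_of_blockDiagonal [NonUnitalNonAssocSemiring R]
    {X : Matrix (ι × κ) (ι × κ) R} (hX : ∀ p q, p.1 ≠ q.1 → X p q = 0) (v : ι × κ → R) (n : ι) :
    (fun i => v (n, i)) ᵥ* X.submatrix (Prod.mk n) (Prod.mk n) = fun j => (v ᵥ* X) (n, j) := by
  funext j
  simp only [vecMul, dotProduct, Fintype.sum_prod_type, submatrix_apply]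
  rw [Finset.sum_eq_single n]
  · intro n' _ hn'
    exact Finset.sum_eq_zero fun i _ => by rw [hX _ _ hn', mul_zero]
  · simp

theorem vecMul_of_smul_row [NonUnitalSemiring R] (b : κ → R) (P : Matrix ι ι' R) (v : ι × κ → R) :
    v ᵥ* of (fun p : ι × κ => b p.2 • P p.1) = (fun n => (fun i => v (n, i)) ⬝ᵥ b) ᵥ* P := by
  funext j
  simp only [vecMul, dotProduct, Fintype.sum_prod_type, of_apply, Pi.smul_apply, smul_eq_mul,
    Finset.sum_mul, mul_assoc]

end BlockRows

end Matrix

theorem stmt3_general (m N : ℕ)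
    (d : Fin m → ℝ)
    (Q : Matrix (Fin m) (Fin m) ℝ)
    (hcascade : ∀ i j : Fin m, (j : ℕ) + 1 < (i : ℕ) → Q i j = 0)
    (hsub : ∀ i j : Fin m, (i : ℕ) = (j : ℕ) + 1 → Q i j ≠ 0)
    (lam : Fin N → ℝ)
    (B : Fin m → ℝ) (hB : ∀ i : Fin m, B i = if (i : ℕ) = 0 then 1 else 0)
    (𝓑 : Matrix (Fin N) (Fin N) ℝ) (h𝓑 : IsUnit 𝓑.det)
    (A : Matrix (Fin N × Fin m) (Fin N × Fin m) ℝ)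
    (hA : ∀ p q : Fin N × Fin m, A p q =
      if p.1 = q.1 then -(lam p.1) * Matrix.diagonal d p.2 q.2 + Q p.2 q.2 else 0)
    (Bt : Matrix (Fin N × Fin m) (Fin N) ℝ)
    (hBt : ∀ (p : Fin N × Fin m) (j : Fin N), Bt p j = B p.2 * 𝓑 p.1 j) :
    ∀ μ : ℂ, 0 ≤ μ.re →
      (Matrix.fromCols (A.map (Complex.ofReal) - μ • (1 : Matrix (Fin N × Fin m) (Fin N × Fin m) ℂ))
        (Bt.map Complex.ofReal)).rank = m * N := by
  intro μ _
  set X := A.map Complex.ofReal - μ • (1 : Matrix (Fin N × Fin m) (Fin N × Fin m) ℂ)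
  have hX : ∀ p q : Fin N × Fin m, p.1 ≠ q.1 → X p q = 0 := fun p q h => by
    simp [X, hA, h, one_apply, Prod.ext_iff]
  have hXcascade (n : Fin N) : (X.submatrix (Prod.mk n) (Prod.mk n)).IsCascade :=
    (IsCascade.map ⟨hcascade, hsub⟩ Complex.ofReal_injective Complex.ofReal_zero).congr_offDiag
      fun i j hij => by simp [X, hA, hij, one_apply]
  have hBt' : Bt.map Complex.ofReal = of fun p => (B p.2 : ℂ) • (𝓑.map Complex.ofReal) p.1 := by
    ext p j; simp [hBt]
  have h𝓑' : (𝓑.map Complex.ofReal).det ≠ 0 := by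
    change (Complex.ofRealHom.mapMatrix 𝓑).det ≠ 0
    rw [← RingHom.map_det]
    exact Complex.ofReal_ne_zero.mpr h𝓑.ne_zero
  refine (rank_eq_card_of_vecMul_eq_zero fun v hv => ?_).trans (by simp [mul_comm])
  have hvX : v ᵥ* X = 0 := funext fun p => congrFun hv (Sum.inl p)
  have hvB : v ᵥ* Bt.map Complex.ofReal = 0 := funext fun j => congrFun hv (Sum.inr j)
  rw [hBt', vecMul_of_smul_row (fun i => (B i : ℂ))] at hvB
  have hhead (n : Fin N) (i : Fin m) (hi : (i : ℕ) = 0) : v (n, i) = 0 := by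
    have hB' : (fun l => (B l : ℂ)) = Pi.single i 1 := by
      funext l; simp [hB, Pi.single_apply, Fin.ext_iff, hi, apply_ite]
    simpa [hB'] using congrFun (eq_zero_of_vecMul_eq_zero h𝓑' hvB) n
  have hblock (n : Fin N) : (fun i => v (n, i)) = 0 :=
    (hXcascade n).eq_zero_of_vecMul_eq_zero
      (by rw [vecMul_submatrix_prodMk_of_blockDiagonal hX, hvX]; rfl) (hhead n)
  funext ⟨n, i⟩
  exact congrFun (hblock n) i

/-- Hautus stabilizability test for the modal system
`(A, B̃)` with block-diagonal `A = diag(−λ_n D + Q)` and `B̃` built from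
`B = e₁` and a nonsingular matrix `𝓑`. -/
theorem stmt3 (m N : ℕ) (hm : 0 < m) (hN : 0 < N)
    (d : Fin m → ℝ) (hd : ∀ i, 0 < d i)
    (Q : Matrix (Fin m) (Fin m) ℝ)
    (hcascade : ∀ i j : Fin m, (j : ℕ) + 1 < (i : ℕ) → Q i j = 0)
    (hsub : ∀ i j : Fin m, (i : ℕ) = (j : ℕ) + 1 → Q i j ≠ 0)
    (lam : Fin N → ℝ) (hnonneg : ∀ n, 0 ≤ lam n)
    (hdist : Function.Injective lam)
    (B : Fin m → ℝ) (hB : ∀ i : Fin m, B i = if (i : ℕ) = 0 then 1 else 0)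
    (𝓑 : Matrix (Fin N) (Fin N) ℝ) (h𝓑 : IsUnit 𝓑.det)
    (A : Matrix (Fin N × Fin m) (Fin N × Fin m) ℝ)
    (hA : ∀ p q : Fin N × Fin m, A p q =
      if p.1 = q.1 then -(lam p.1) * Matrix.diagonal d p.2 q.2 + Q p.2 q.2 else 0)
    (Bt : Matrix (Fin N × Fin m) (Fin N) ℝ)
    (hBt : ∀ (p : Fin N × Fin m) (j : Fin N), Bt p j = B p.2 * 𝓑 p.1 j) :
    ∀ μ : ℂ, 0 ≤ μ.re →
      (Matrix.fromCols (A.map (Complex.ofReal) - μ • (1 : Matrix (Fin N × Fin m) (Fin N × Fin m) ℂ))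
        (Bt.map Complex.ofReal)).rank = m * N :=
  stmt3_general m N d Q hcascade hsub lam B hB 𝓑 h𝓑 A hA Bt hBt
end

section
/- Let Q ∈ ℝ^{m×m} with q_{i,j} = 0 for i > j+1 and q_{i+1,i} ≠ 0 for all i, B = e_1 ∈ ℝ^m, D = diag(d_1,...,d_m) with d_i > 0, and d_m the last entry. Then there exists a matrix T̄_1 ∈ ℝ^{m×m}, strictly upper triangular with nonzero entries only in positions (j,k) with j ≤ m−2 and k ≥ j+1, such that (I_m − BBᵀ)(Q T̄_1 − T̄_1 Q + (D − d_m I_m)) = 0. -/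
open Matrix

noncomputable def Tf (m : ℕ) (Q : Matrix (Fin m) (Fin m) ℝ) (d : Fin m → ℝ) (dm : ℝ)
    (i j : Fin m) : ℝ :=
  if h : m ≤ (i : ℕ) + 2 ∨ (j : ℕ) ≤ (i : ℕ) then 0
  else
    have hi1 : (i : ℕ) + 1 < m := by omega
    (0 - ((∑ k : Fin m, if hk : (i : ℕ) < (k : ℕ) then
            Q ⟨(i : ℕ) + 1, hi1⟩ k * Tf m Q d dm k j else 0)
      - (∑ k : Fin m, Tf m Q d dm ⟨(i : ℕ) + 1, hi1⟩ k * Q k j)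
      + (if (i : ℕ) + 1 = (j : ℕ) then d ⟨(i : ℕ) + 1, hi1⟩ - dm else 0)))
      / Q ⟨(i : ℕ) + 1, hi1⟩ i
termination_by m - (i : ℕ)
decreasing_by
  · omega
  · omega

lemma Tf_zero (m : ℕ) (Q : Matrix (Fin m) (Fin m) ℝ) (d : Fin m → ℝ) (dm : ℝ)
    (i j : Fin m) (h : m ≤ (i : ℕ) + 2 ∨ (j : ℕ) ≤ (i : ℕ)) :
    Tf m Q d dm i j = 0 := by
  rw [Tf, dif_pos h]

lemma Tf_eq (m : ℕ) (Q : Matrix (Fin m) (Fin m) ℝ) (d : Fin m → ℝ) (dm : ℝ)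
    (i j : Fin m) (h : ¬ (m ≤ (i : ℕ) + 2 ∨ (j : ℕ) ≤ (i : ℕ)))
    (hi1 : (i : ℕ) + 1 < m) (hQ : Q ⟨(i : ℕ) + 1, hi1⟩ i ≠ 0) :
    Q ⟨(i : ℕ) + 1, hi1⟩ i * Tf m Q d dm i j =
      (0 - ((∑ k : Fin m, if (i : ℕ) < (k : ℕ) then
              Q ⟨(i : ℕ) + 1, hi1⟩ k * Tf m Q d dm k j else 0)
        - (∑ k : Fin m, Tf m Q d dm ⟨(i : ℕ) + 1, hi1⟩ k * Q k j)
        + (if (i : ℕ) + 1 = (j : ℕ) then d ⟨(i : ℕ) + 1, hi1⟩ - dm else 0))) := by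
  conv_lhs => rw [Tf, dif_neg h]
  rw [mul_comm, div_mul_cancel₀]
  · simp
  · exact hQ

/-- solvability of the first generalized Sylvester equation:
there is a strictly upper triangular `T̄₁`, with zero rows from row `m−1` on
(1-indexed), such that `(I − BBᵀ)(Q T̄₁ − T̄₁ Q + (D − d_m I)) = 0`. -/
theorem stmt9 (m : ℕ) (hm : 0 < m) (Q : Matrix (Fin m) (Fin m) ℝ)
    (hcascade : ∀ i j : Fin m, (j : ℕ) + 1 < (i : ℕ) → Q i j = 0)
    (hsub : ∀ i j : Fin m, (i : ℕ) = (j : ℕ) + 1 → Q i j ≠ 0)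
    (B : Matrix (Fin m) (Fin 1) ℝ)
    (hB : ∀ i : Fin m, B i 0 = if (i : ℕ) = 0 then 1 else 0)
    (d : Fin m → ℝ) (hd : ∀ i, 0 < d i)
    (dm : ℝ) (hdm : dm = d ⟨m - 1, by omega⟩) :
    ∃ T1 : Matrix (Fin m) (Fin m) ℝ,
      (∀ i j : Fin m, (j : ℕ) ≤ (i : ℕ) → T1 i j = 0) ∧
      (∀ i j : Fin m, m - 2 ≤ (i : ℕ) → T1 i j = 0) ∧
      ((1 : Matrix (Fin m) (Fin m) ℝ) - B * Bᵀ) *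
        (Q * T1 - T1 * Q + (Matrix.diagonal d - dm • 1)) = 0 := by
  refine ⟨Matrix.of (Tf m Q d dm), ?_, ?_, ?_⟩
  · intro i j hji; exact Tf_zero m Q d dm i j (Or.inr hji)
  · intro i j him; exact Tf_zero m Q d dm i j (Or.inl (by omega))
  · set T1 : Matrix (Fin m) (Fin m) ℝ := Matrix.of (Tf m Q d dm) with hT1
    set E : Matrix (Fin m) (Fin m) ℝ :=
      Q * T1 - T1 * Q + (Matrix.diagonal d - dm • 1) with hE
    have key : ∀ i j : Fin m, 0 < (i : ℕ) → E i j = 0 := by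
      intro i j hi
      have hEij : E i j = (∑ k : Fin m, Q i k * Tf m Q d dm k j)
          - (∑ k : Fin m, Tf m Q d dm i k * Q k j)
          + ((if i = j then d i else 0) - dm * (if i = j then 1 else 0)) := by
        simp [hE, Matrix.add_apply, Matrix.sub_apply, Matrix.mul_apply,
          Matrix.diagonal_apply, Matrix.smul_apply, Matrix.one_apply, hT1]
      by_cases hmle : m ≤ (i : ℕ) + 1
      · -- last row: everything vanishes
        have h1 : ∀ k : Fin m, Q i k * Tf m Q d dm k j = 0 := by
          intro k
          by_cases hk : (k : ℕ) + 1 < (i : ℕ)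
          · rw [hcascade i k hk, zero_mul]
          · rw [Tf_zero m Q d dm k j (Or.inl (by omega)), mul_zero]
        have h2 : ∀ k : Fin m, Tf m Q d dm i k * Q k j = 0 := fun k => by
          rw [Tf_zero m Q d dm i k (Or.inl (by omega)), zero_mul]
        rw [hEij, Finset.sum_eq_zero (fun k _ => h1 k),
          Finset.sum_eq_zero (fun k _ => h2 k)]
        by_cases hij : i = j
        · have hiv : i = (⟨m - 1, by omega⟩ : Fin m) := Fin.ext (by simp; omega)
          rw [← hij]
          simp [hdm, ← hiv]
        · simp [hij]
      · push_neg at hmle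
        set i' : Fin m := ⟨(i : ℕ) - 1, by omega⟩ with hi'def
        have hii' : (i' : ℕ) + 1 = (i : ℕ) := by simp [hi'def]; omega
        by_cases hji : (j : ℕ) ≤ (i' : ℕ)
        · -- below the diagonal: every term vanishes
          have hij : ¬ (i = j) := by
            intro e; rw [e] at hii'; simp [hi'def] at hji; omega
          have h1 : ∀ k : Fin m, Q i k * Tf m Q d dm k j = 0 := by
            intro k
            by_cases hk : (k : ℕ) + 1 < (i : ℕ)
            · rw [hcascade i k hk, zero_mul]
            · rw [Tf_zero m Q d dm k j (Or.inr (by simp [hi'def] at hji; omega)),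
                mul_zero]
          have h2 : ∀ k : Fin m, Tf m Q d dm i k * Q k j = 0 := by
            intro k
            by_cases hk : (k : ℕ) ≤ (i : ℕ)
            · rw [Tf_zero m Q d dm i k (Or.inr hk), zero_mul]
            · rw [hcascade k j (by omega), mul_zero]
          rw [hEij, Finset.sum_eq_zero (fun k _ => h1 k),
            Finset.sum_eq_zero (fun k _ => h2 k)]
          simp [hij]
        · push_neg at hji
          have hcond : ¬ (m ≤ (i' : ℕ) + 2 ∨ (j : ℕ) ≤ (i' : ℕ)) := by omega
          have hi'1 : (i' : ℕ) + 1 < m := by omega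
          have hifin : (⟨(i' : ℕ) + 1, hi'1⟩ : Fin m) = i := Fin.ext hii'
          have hQ' : Q i i' ≠ 0 := hsub i i' (by omega)
          have heq := Tf_eq m Q d dm i' j hcond hi'1 (by rw [hifin]; exact hQ')
          rw [hifin] at heq
          -- split the first sum at k = i'
          have hpt : ∀ k : Fin m, Q i k * Tf m Q d dm k j =
              (if k = i' then Q i i' * Tf m Q d dm i' j else 0)
              + (if (i' : ℕ) < (k : ℕ) then Q i k * Tf m Q d dm k j else 0) := by
            intro k
            rcases lt_trichotomy ((k : ℕ)) ((i' : ℕ)) with h | h | h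
            · have hk : k ≠ i' := by intro e; rw [e] at h; omega
              rw [hcascade i k (by omega)]
              simp [hk, not_lt.mpr (le_of_lt h)]
            · have hk : k = i' := Fin.ext h
              subst hk; simp
            · have hk : k ≠ i' := by intro e; rw [e] at h; omega
              simp [hk, h]
          have hsplit : (∑ k : Fin m, Q i k * Tf m Q d dm k j) =
              Q i i' * Tf m Q d dm i' j
              + ∑ k : Fin m,
                  (if (i' : ℕ) < (k : ℕ) then Q i k * Tf m Q d dm k j else 0) := by
            rw [Finset.sum_congr rfl (fun k _ => hpt k), Finset.sum_add_distrib,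
              Finset.sum_ite_eq' Finset.univ i'
                (fun _ => Q i i' * Tf m Q d dm i' j)]
            simp
          have hdiag : (if i = j then d i else 0) - dm * (if i = j then 1 else 0)
              = (if (i' : ℕ) + 1 = (j : ℕ) then d i - dm else 0) := by
            by_cases hij : i = j
            · rw [if_pos hij, if_pos hij, if_pos (by rw [hii', hij])]; ring
            · rw [if_neg hij, if_neg hij,
                if_neg (by rw [hii']; exact fun e => hij (Fin.ext e))]; ring
          rw [hEij, hsplit, hdiag, heq, hii']
          ring
    ext i j
    have hprod : ((1 : Matrix (Fin m) (Fin m) ℝ) - B * Bᵀ) * E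
        = E - B * (Bᵀ * E) := by
      rw [Matrix.sub_mul, Matrix.one_mul, Matrix.mul_assoc]
    set z : Fin m := ⟨0, hm⟩ with hz
    have hsum : (∑ x : Fin m, (if (x : ℕ) = 0 then (1 : ℝ) else 0) * E x j)
        = E z j := by
      rw [Finset.sum_eq_single z]
      · simp [hz]
      · intro k _ hk
        have hk0 : (k : ℕ) ≠ 0 := fun e => hk (Fin.ext e)
        simp [hk0]
      · simp
    rw [hprod]
    simp only [Matrix.sub_apply, Matrix.mul_apply, Matrix.transpose_apply,
      Fin.sum_univ_one, hB, Matrix.zero_apply, hsum]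
    by_cases hi0 : (i : ℕ) = 0
    · rw [show i = z from Fin.ext hi0]
      simp [hz]
    · simp [hi0, key i j (by omega)]
end
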